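/- Let γ_∞ be the infinite product of the standard Gaussian measure on ℝ^ℕ. If a ∈ ℝ and K ⊆ ℝ^ℕ is a Borel set with γ_∞(K) > 0, then for γ_∞-almost every y ∈ ℝ^ℕ, γ_∞(√(1+a²)·K + a·y) > 0. -/

import Mathlib

open MeasureTheory ProbabilityTheory

/-- `μ` is the countable product of standard one-dimensional Gaussian measures on `ℝ^ℕ`:
a probability measure whose coordinates are i.i.d. standard Gaussians. -/
def IsStdGaussianSeq (μ : Measure (ℕ → ℝ)) : Prop :=
  IsProbabilityMeasure μ ∧
  iIndepFun (fun i (x : ℕ → ℝ) => x i) μ ∧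
  ∀ i, μ.map (fun x => x i) = gaussianReal 0 1

/-!
Write `c = √(1 + a²)`. The image `c • K + a • y` is the section at `y` of the preimage of `K`
under `W (y, z) = (z - a • y) / c`. Since `(a / c) ^ 2 + (1 / c) ^ 2 = 1`, the map `W` is a
rotation of two independent standard Gaussian sequences, so it maps `γ ⊗ γ` to `γ`, and by Fubini
the sections have measure `γ K > 0` on average. The section at `y` has the measure of `K` under
the product of the Gaussians with means `-a yᵢ / c` and variance `1 / c²`; modifying finitely many
`yᵢ` gives an equivalent measure, so the set of `y` with a null section is a tail event. By
Kolmogorov's zero–one law it has measure `0` or `1`, and the positive average rules out `1`.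
-/

open Filter
open scoped ENNReal NNReal

namespace MeasureTheory.Measure

theorem infinitePi_map_arrowProdEquivProdArrow {ι X Y : Type*} [MeasurableSpace X]
    [MeasurableSpace Y] (μ : ι → Measure X) (ν : ι → Measure Y) [∀ i, IsProbabilityMeasure (μ i)]
    [∀ i, IsProbabilityMeasure (ν i)] :
    (infinitePi fun i ↦ (μ i).prod (ν i)).map (MeasurableEquiv.arrowProdEquivProdArrow X Y ι)
      = (infinitePi μ).prod (infinitePi ν) := by
  rw [MeasurableEquiv.map_apply_eq_iff_map_symm_apply_eq, eq_comm]
  refine IsProjectiveLimit.unique (fun I ↦ ?_) (isProjectiveLimit_infinitePi _)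
  have hcomm : I.restrict ∘ (MeasurableEquiv.arrowProdEquivProdArrow X Y ι).symm
      = (MeasurableEquiv.arrowProdEquivProdArrow X Y I).symm ∘ Prod.map I.restrict I.restrict :=
    rfl
  rw [map_map (by fun_prop) (MeasurableEquiv.measurable _), hcomm,
    ← map_map (MeasurableEquiv.measurable _) (by fun_prop), ← map_prod_map _ _ (by fun_prop)
    (by fun_prop), infinitePi_map_restrict, infinitePi_map_restrict]
  exact (measurePreserving_arrowProdEquivProdArrow X Y I _ _).symm.map_eq

section AbsolutelyContinuous

variable {ι : Type*} {X : ι → Type*} [∀ i, MeasurableSpace (X i)]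

theorem infinitePi_eq_withDensity {μ ν : (i : ι) → Measure (X i)}
    [∀ i, IsProbabilityMeasure (μ i)] [∀ i, IsProbabilityMeasure (ν i)] (s : Finset ι)
    {ρ : (i : ι) → X i → ℝ≥0∞} (hρ : ∀ i, Measurable (ρ i))
    (hμ : ∀ i, μ i = (ν i).withDensity (ρ i)) (hρ_one : ∀ i ∉ s, ρ i = 1) :
    infinitePi μ = (infinitePi ν).withDensity fun x ↦ ∏ i ∈ s, ρ i (x i) := by
  classical
  refine (eq_infinitePi _ fun t B hB ↦ ?_).symm
  -- On the box `Set.pi t B` the density factors over the coordinates in `s ∪ t`.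
  let g : (i : ι) → X i → ℝ≥0∞ := fun i y ↦ (if i ∈ t then (B i).indicator 1 y else 1) * ρ i y
  have hg : ∀ i, Measurable (g i) := fun i ↦ by
    refine Measurable.mul ?_ (hρ i)
    split_ifs
    exacts [measurable_one.indicator (hB i), measurable_const]
  have hindicator : ∀ x, (Set.pi t B).indicator (fun x ↦ ∏ i ∈ s, ρ i (x i)) x
      = ∏ i ∈ s ∪ t, g i (x i) := fun x ↦ by
    have hρ_prod : ∏ i ∈ s, ρ i (x i) = ∏ i ∈ s ∪ t, ρ i (x i) :=
      Finset.prod_subset Finset.subset_union_left fun i _ hi ↦ by simp [hρ_one i hi]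
    have hB_prod : (Set.pi t B).indicator 1 x
        = ∏ i ∈ s ∪ t, (if i ∈ t then (B i).indicator 1 (x i) else 1 : ℝ≥0∞) := by
      rw [Finset.prod_ite_mem, Finset.union_inter_cancel_right, Set.indicator_pi_one_apply]
    rw [Finset.prod_mul_distrib, ← hρ_prod, ← hB_prod]
    by_cases hx : x ∈ Set.pi t B <;> simp [hx]
  have hfactor : ∀ i, ∫⁻ x, g i (x i) ∂infinitePi ν = if i ∈ t then μ i (B i) else 1 := fun i ↦ by
    rw [(measurePreserving_eval_infinitePi ν i).lintegral_comp (hg i), hμ i]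
    split_ifs with hi
    · rw [withDensity_apply _ (hB i), ← lintegral_indicator (hB i)]
      congr with y
      by_cases hy : y ∈ B i <;> simp [g, hi, hy]
    · simp only [g, hi, if_false, one_mul]
      rw [← setLIntegral_univ, ← withDensity_apply _ .univ, ← hμ i, measure_univ]
  have hbox : MeasurableSet (Set.pi t B) := .pi t.countable_toSet fun i _ ↦ hB i
  rw [withDensity_apply _ hbox, ← lintegral_indicator hbox]
  simp_rw [hindicator]
  rw [lintegral_prod_eq_prod_lintegral_of_indepFun _ _ (iIndepFun_infinitePi hg)
    fun i ↦ (hg i).comp (measurable_pi_apply i)]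
  simp_rw [hfactor]
  rw [Finset.prod_ite_mem, Finset.union_inter_cancel_right]

theorem infinitePi_absolutelyContinuous {μ ν : (i : ι) → Measure (X i)}
    [∀ i, IsProbabilityMeasure (μ i)] [∀ i, IsProbabilityMeasure (ν i)]
    (hac : ∀ i, μ i ≪ ν i) (heq : ∀ᶠ i in Filter.cofinite, μ i = ν i) :
    infinitePi μ ≪ infinitePi ν := by
  classical
  let s := (Filter.eventually_cofinite.mp heq).toFinset
  let ρ : (i : ι) → X i → ℝ≥0∞ := fun i ↦ if i ∈ s then (μ i).rnDeriv (ν i) else 1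
  have hρ : ∀ i, Measurable (ρ i) := fun i ↦ by
    unfold ρ
    split_ifs
    exacts [measurable_rnDeriv _ _, measurable_one]
  have hμ : ∀ i, μ i = (ν i).withDensity (ρ i) := fun i ↦ by
    by_cases hi : i ∈ s
    · simp only [ρ, hi, if_true, withDensity_rnDeriv_eq _ _ (hac i)]
    · have hμν : μ i = ν i := by simpa [s] using hi
      simp only [ρ, hi, if_false, withDensity_one, hμν]
  rw [infinitePi_eq_withDensity s hρ hμ fun i hi ↦ if_neg hi]
  exact withDensity_absolutelyContinuous _ _

end AbsolutelyContinuous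

end MeasureTheory.Measure

theorem measurableSet_limsup_comap_eval_of_eventuallyEq {β : Type*} [mβ : MeasurableSpace β]
    [Nonempty β] {E : Set (ℕ → β)} (hE : MeasurableSet E)
    (hinv : ∀ x y, x =ᶠ[atTop] y → x ∈ E → y ∈ E) :
    MeasurableSet[limsup (fun i ↦ mβ.comap fun x : ℕ → β ↦ x i) atTop] E := by
  rw [limsup_eq_iInf_iSup_of_nat, MeasurableSpace.measurableSet_iInf]
  intro n
  classical
  -- `E = r ⁻¹' E`, and `r` only reads the coordinates `≥ n`.
  let r : (ℕ → β) → (ℕ → β) := fun x i ↦ if i < n then Classical.arbitrary β else x i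
  have hr : Measurable[⨆ i ≥ n, mβ.comap fun x : ℕ → β ↦ x i] r := by
    refine @measurable_pi_lambda _ _ _ (_) _ r fun i ↦ ?_
    by_cases hi : i < n
    · simp only [r, hi, if_true]
      exact measurable_const
    · simp only [r, hi, if_false]
      exact (comap_measurable _).mono
        (le_iSup₂ (f := fun i (_ : i ≥ n) ↦ mβ.comap fun x : ℕ → β ↦ x i) i (not_lt.mp hi)) le_rfl
  have hrE : r ⁻¹' E = E := by
    ext x
    have hxr : r x =ᶠ[atTop] x := eventually_atTop.mpr ⟨n, fun i hi ↦ if_neg (not_lt.mpr hi)⟩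
    exact ⟨hinv _ _ hxr, hinv _ _ hxr.symm⟩
  rw [← hrE]
  exact hr hE

namespace ProbabilityTheory

section ZeroOne

variable {β : Type*} [MeasurableSpace β] [Nonempty β] {μ : Measure (ℕ → β)}

theorem iIndepFun.measure_eq_zero_or_one_of_eventuallyEq
    (hμ : iIndepFun (fun i (x : ℕ → β) ↦ x i) μ) {E : Set (ℕ → β)} (hE : MeasurableSet E)
    (hinv : ∀ x y, x =ᶠ[atTop] y → x ∈ E → y ∈ E) : μ E = 0 ∨ μ E = 1 :=
  measure_zero_or_one_of_measurableSet_limsup_atTop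
    (fun i ↦ (measurable_pi_apply i).comap_le) hμ.iIndep
    (measurableSet_limsup_comap_eval_of_eventuallyEq hE hinv)

theorem iIndepFun.ae_pos_of_lintegral_ne_zero
    (hμ : iIndepFun (fun i (x : ℕ → β) ↦ x i) μ) {f : (ℕ → β) → ℝ≥0∞} (hf : Measurable f)
    (hinv : ∀ x y, x =ᶠ[atTop] y → f x ≠ 0 → f y ≠ 0) (hint : ∫⁻ x, f x ∂μ ≠ 0) :
    ∀ᵐ x ∂μ, 0 < f x := by
  have := hμ.isProbabilityMeasure
  have hE : MeasurableSet {x | f x ≠ 0} := hf (measurableSet_singleton 0).compl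
  simp_rw [pos_iff_ne_zero]
  rcases hμ.measure_eq_zero_or_one_of_eventuallyEq hE hinv with h0 | h1
  · refine absurd ((lintegral_eq_zero_iff hf).mpr ?_) hint
    simpa [Filter.EventuallyEq, ae_iff] using h0
  · rwa [ae_iff, ← Set.compl_ofPred, prob_compl_eq_zero_iff hE]

end ZeroOne

theorem gaussianReal_map_const_add_const_mul (m c β : ℝ) (v : ℝ≥0) :
    (gaussianReal m v).map (fun r ↦ c + β * r)
      = gaussianReal (c + β * m) (.mk (β ^ 2) (sq_nonneg β) * v) := by
  rw [← Function.comp_def (c + ·) (β * ·), ← Measure.map_map (by fun_prop) (by fun_prop),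
    gaussianReal_map_const_mul, gaussianReal_map_const_add, add_comm]

theorem gaussianReal_prod_map_const_mul_add_const_mul {m₁ m₂ : ℝ} {v₁ v₂ : ℝ≥0} (α β : ℝ) :
    ((gaussianReal m₁ v₁).prod (gaussianReal m₂ v₂)).map (fun q ↦ α * q.1 + β * q.2)
      = gaussianReal (α * m₁ + β * m₂)
          (.mk (α ^ 2) (sq_nonneg α) * v₁ + .mk (β ^ 2) (sq_nonneg β) * v₂) := by
  rw [← gaussianReal_conv_gaussianReal, ← gaussianReal_map_const_mul, ← gaussianReal_map_const_mul,
    Measure.conv, Measure.map_prod_map _ _ (by fun_prop) (by fun_prop),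
    Measure.map_map (by fun_prop) (by fun_prop)]
  rfl

section InfinitePi

variable {ι : Type*}

theorem infinitePi_gaussianReal_map_const_add_smul (u : ι → ℝ) (β : ℝ) :
    (Measure.infinitePi fun _ : ι ↦ gaussianReal 0 1).map (fun z ↦ u + β • z)
      = Measure.infinitePi fun i ↦ gaussianReal (u i) (.mk (β ^ 2) (sq_nonneg β)) := by
  rw [show (fun z : ι → ℝ ↦ u + β • z) = fun z i ↦ u i + β * z i from rfl,
    Measure.infinitePi_map_pi (f := fun i (r : ℝ) ↦ u i + β * r) _ fun i ↦ by fun_prop]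
  simp_rw [gaussianReal_map_const_add_const_mul, mul_zero, add_zero, mul_one]

theorem infinitePi_gaussianReal_prod_map_smul_add_smul {α β : ℝ} (hαβ : α ^ 2 + β ^ 2 = 1) :
    ((Measure.infinitePi fun _ : ι ↦ gaussianReal 0 1).prod
      (Measure.infinitePi fun _ : ι ↦ gaussianReal 0 1)).map (fun p ↦ α • p.1 + β • p.2)
      = Measure.infinitePi fun _ : ι ↦ gaussianReal 0 1 := by
  have hvar : (.mk (α ^ 2) (sq_nonneg α) * 1 + .mk (β ^ 2) (sq_nonneg β) * 1 : ℝ≥0) = 1 := by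
    ext
    simpa using hαβ
  rw [← Measure.infinitePi_map_arrowProdEquivProdArrow,
    Measure.map_map (by fun_prop) (MeasurableEquiv.measurable _),
    show (fun p : (ι → ℝ) × (ι → ℝ) ↦ α • p.1 + β • p.2) ∘
      MeasurableEquiv.arrowProdEquivProdArrow ℝ ℝ ι = fun ω i ↦ α * (ω i).1 + β * (ω i).2 from rfl,
    Measure.infinitePi_map_pi (f := fun _ (q : ℝ × ℝ) ↦ α * q.1 + β * q.2) _ fun i ↦ by fun_prop]
  simp_rw [gaussianReal_prod_map_const_mul_add_const_mul, mul_zero, add_zero, hvar]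

theorem infinitePi_gaussianReal_absolutelyContinuous {m m' : ι → ℝ} (h : m =ᶠ[cofinite] m')
    {v : ℝ≥0} (hv : v ≠ 0) :
    Measure.infinitePi (fun i ↦ gaussianReal (m i) v)
      ≪ Measure.infinitePi (fun i ↦ gaussianReal (m' i) v) :=
  Measure.infinitePi_absolutelyContinuous
    (fun i ↦ (gaussianReal_absolutelyContinuous _ hv).trans (gaussianReal_absolutelyContinuous' _ hv))
    (h.mono fun i hi ↦ by rw [hi])

theorem infinitePi_gaussianReal_preimage_const_add_smul_eq_zero_iff {u u' : ι → ℝ}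
    (h : u =ᶠ[cofinite] u') {β : ℝ} (hβ : β ≠ 0) {K : Set (ι → ℝ)} (hK : MeasurableSet K) :
    Measure.infinitePi (fun _ ↦ gaussianReal 0 1) ((fun z ↦ u + β • z) ⁻¹' K) = 0 ↔
      Measure.infinitePi (fun _ ↦ gaussianReal 0 1) ((fun z ↦ u' + β • z) ⁻¹' K) = 0 := by
  have hv : (.mk (β ^ 2) (sq_nonneg β) : ℝ≥0) ≠ 0 := by
    rw [ne_eq, ← NNReal.coe_eq_zero]
    exact pow_ne_zero 2 hβ
  rw [← Measure.map_apply (by fun_prop) hK, ← Measure.map_apply (by fun_prop) hK,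
    infinitePi_gaussianReal_map_const_add_smul, infinitePi_gaussianReal_map_const_add_smul]
  exact ⟨fun h0 ↦ infinitePi_gaussianReal_absolutelyContinuous h.symm hv h0,
    fun h0 ↦ infinitePi_gaussianReal_absolutelyContinuous h hv h0⟩

end InfinitePi

end ProbabilityTheory

theorem Set.image_smul_add_smul_eq_preimage {𝕜 E : Type*} [Field 𝕜] [AddCommGroup E]
    [Module 𝕜 E] {c : 𝕜} (hc : c ≠ 0) (a : 𝕜) (y : E) (K : Set E) :
    (fun x ↦ c • x + a • y) '' K = (fun z ↦ -(a / c) • y + c⁻¹ • z) ⁻¹' K := by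
  refine congrFun (Set.image_eq_preimage_of_inverse (fun x ↦ ?_) (fun z ↦ ?_)) K <;>
  · match_scalars <;> grind

theorem IsStdGaussianSeq.eq_infinitePi {μ : Measure (ℕ → ℝ)} (hμ : IsStdGaussianSeq μ) :
    μ = Measure.infinitePi fun _ ↦ gaussianReal 0 1 := by
  obtain ⟨-, hindep, hlaw⟩ := hμ
  simpa [hlaw] using hindep.map_fun_eq_infinitePi_map measurable_pi_apply

theorem stmt_1 (γinf : Measure (ℕ → ℝ)) (hγ : IsStdGaussianSeq γinf) (a : ℝ)
    (K : Set (ℕ → ℝ)) (hK : MeasurableSet K) (hKpos : 0 < γinf K) :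
    ∀ᵐ y ∂γinf, 0 < γinf ((fun x => Real.sqrt (1 + a ^ 2) • x + a • y) '' K) := by
  obtain rfl := hγ.eq_infinitePi
  set γ := Measure.infinitePi fun _ : ℕ ↦ gaussianReal 0 1
  set c := Real.sqrt (1 + a ^ 2)
  have hc : c ≠ 0 := Real.sqrt_ne_zero'.mpr (by positivity)
  have hc2 : c ^ 2 = 1 + a ^ 2 := Real.sq_sqrt (by positivity)
  have hrot : (-(a / c)) ^ 2 + c⁻¹ ^ 2 = 1 := by
    rw [neg_sq, div_pow, inv_pow, hc2]
    field_simp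
    ring
  let W : (ℕ → ℝ) × (ℕ → ℝ) → ℕ → ℝ := fun p ↦ -(a / c) • p.1 + c⁻¹ • p.2
  have hW : Measurable W := by fun_prop
  have htail (y y' : ℕ → ℝ) (h : y =ᶠ[atTop] y') :
      γ (Prod.mk y ⁻¹' (W ⁻¹' K)) ≠ 0 → γ (Prod.mk y' ⁻¹' (W ⁻¹' K)) ≠ 0 :=
    (infinitePi_gaussianReal_preimage_const_add_smul_eq_zero_iff
      ((Nat.cofinite_eq_atTop ▸ h).const_smul _) (inv_ne_zero hc) hK).not.mp
  have hint : ∫⁻ y, γ (Prod.mk y ⁻¹' (W ⁻¹' K)) ∂γ ≠ 0 := by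
    rw [← Measure.prod_apply (hW hK), ← Measure.map_apply hW hK,
      infinitePi_gaussianReal_prod_map_smul_add_smul hrot]
    exact hKpos.ne'
  have hindep : iIndepFun (fun i (x : ℕ → ℝ) ↦ x i) γ :=
    iIndepFun_infinitePi (X := fun _ ↦ id) fun _ ↦ measurable_id
  simp_rw [Set.image_smul_add_smul_eq_preimage hc]
  exact hindep.ae_pos_of_lintegral_ne_zero (measurable_measure_prodMk_left (hW hK)) htail hint
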